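/- arXiv:math/0312413 — 3 statements merged into one kernel-verified Lean document; each statement's English description precedes it below -/
import Mathlib

section
/- Let A be a commutative ring and let v₁, v₂, v₃, w₁, w₂, w₃ ∈ A² be such that for all i ≠ j the determinant det(vᵢ|vⱼ) is a unit of A, and likewise det(wᵢ|wⱼ) is a unit of A for all i ≠ j. Then there exists an invertible matrix B ∈ M₂(A) and units u₁, u₂, u₃ ∈ A^× such that B·vᵢ = uᵢ·wᵢ (as column vectors) for i = 1, 2, 3. -/
/-!
Call two families of vectors in `A²` projectively equivalent if some invertible matrix maps each
vector of the first family to a unit multiple of the corresponding vector of the second; this is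
an equivalence relation. A triple `v` whose pairwise determinants are units is projectively
equivalent to the standard frame `e₀, e₁, e₀ + e₁`: the adjugate of the matrix with columns
`v₀, v₁` sends them to multiples of `e₀, e₁`, and sends `v₂`, by Cramer's rule, to
`(det(v₂|v₁), det(v₀|v₂))`, whose entries are units and are rescaled to `1`.
-/

open Matrix

section ProjectiveEquivalence

variable {A ι n : Type*} [CommRing A] [Fintype n] [DecidableEq n]

def ProjectivelyEquivalent (v w : ι → n → A) : Prop :=
  ∃ B : Matrix n n A, IsUnit B ∧ ∃ u : ι → Aˣ, ∀ i, B *ᵥ v i = (u i : A) • w i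

namespace ProjectivelyEquivalent

theorem symm {v w : ι → n → A} (h : ProjectivelyEquivalent v w) :
    ProjectivelyEquivalent w v := by
  obtain ⟨_, ⟨B, rfl⟩, u, hu⟩ := h
  refine ⟨↑B⁻¹, B⁻¹.isUnit, fun i => (u i)⁻¹, fun i => ?_⟩
  calc (↑B⁻¹ : Matrix n n A) *ᵥ w i
      = (↑B⁻¹ : Matrix n n A) *ᵥ (((u i)⁻¹ : Aˣ) : A) • (u i : A) • w i := by
        rw [smul_smul, Units.inv_mul, one_smul]
    _ = (((u i)⁻¹ : Aˣ) : A) • v i := by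
        rw [← hu, mulVec_smul, mulVec_mulVec, ← Units.val_mul, inv_mul_cancel,
          Units.val_one, one_mulVec]

theorem trans {v w x : ι → n → A} (hvw : ProjectivelyEquivalent v w)
    (hwx : ProjectivelyEquivalent w x) : ProjectivelyEquivalent v x := by
  obtain ⟨B, hB, u, hu⟩ := hvw
  obtain ⟨C, hC, t, ht⟩ := hwx
  refine ⟨C * B, hC.mul hB, fun i => t i * u i, fun i => ?_⟩
  rw [← mulVec_mulVec, hu, mulVec_smul, ht, smul_smul, Units.val_mul, mul_comm]

end ProjectivelyEquivalent

end ProjectiveEquivalence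

theorem projectivelyEquivalent_standardFrame {A : Type*} [CommRing A] (v : Fin 3 → Fin 2 → A)
    (hv : ∀ i j : Fin 3, i ≠ j → IsUnit (v i 0 * v j 1 - v i 1 * v j 0)) :
    ProjectivelyEquivalent v ![![1, 0], ![0, 1], ![1, 1]] := by
  obtain ⟨P, hP⟩ := hv 0 1 (by decide)
  obtain ⟨Q, hQ⟩ := hv 2 1 (by decide)
  obtain ⟨R, hR⟩ := hv 0 2 (by decide)
  have hQ' : (v 2 0 * v 1 1 - v 2 1 * v 1 0) * ↑Q⁻¹ = 1 := by rw [← hQ, Units.mul_inv]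
  have hR' : (v 0 0 * v 2 1 - v 0 1 * v 2 0) * ↑R⁻¹ = 1 := by rw [← hR, Units.mul_inv]
  refine ⟨!![v 1 1 * ↑Q⁻¹, -v 1 0 * ↑Q⁻¹; -v 0 1 * ↑R⁻¹, v 0 0 * ↑R⁻¹], ?_,
    ![P * Q⁻¹, P * R⁻¹, 1], ?_⟩
  · rw [isUnit_iff_isUnit_det, det_fin_two_of]
    convert (P * Q⁻¹ * R⁻¹).isUnit using 1
    simp only [Units.val_mul, hP]
    ring
  · intro i
    fin_cases i <;> ext k <;> fin_cases k <;> simp [hP, vecHead, vecTail]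
    all_goals first | ring1 | linear_combination hQ' | linear_combination hR'

/-- Let `A` be a commutative ring and `v₁, v₂, v₃, w₁, w₂, w₃ ∈ A²`
such that for all `i ≠ j` the determinants `det(vᵢ|vⱼ)` and `det(wᵢ|wⱼ)` are units of `A`.
Then there exists an invertible matrix `B ∈ M₂(A)` and units `u₁, u₂, u₃ ∈ Aˣ` such that
`B · vᵢ = uᵢ · wᵢ` for `i = 1, 2, 3`. -/
theorem stmt0 {A : Type*} [CommRing A] (v w : Fin 3 → Fin 2 → A)
    (hv : ∀ i j : Fin 3, i ≠ j → IsUnit (v i 0 * v j 1 - v i 1 * v j 0))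
    (hw : ∀ i j : Fin 3, i ≠ j → IsUnit (w i 0 * w j 1 - w i 1 * w j 0)) :
    ∃ B : Matrix (Fin 2) (Fin 2) A, IsUnit B ∧
      ∃ u : Fin 3 → Aˣ, ∀ i : Fin 3, B.mulVec (v i) = (u i : A) • w i :=
  (projectivelyEquivalent_standardFrame v hv).trans
    (projectivelyEquivalent_standardFrame w hw).symm
end

section
/- Let A be a commutative ring and let v₁, v₂, v₃, w₁, w₂, w₃ ∈ A² be such that for all i ≠ j the determinant det(vᵢ|vⱼ) is a unit of A, and likewise det(wᵢ|wⱼ) is a unit of A for all i ≠ j. If B and B′ are invertible matrices in M₂(A) such that for each i = 1, 2, 3 there exist units uᵢ, u′ᵢ ∈ A^× with B·vᵢ = uᵢ·wᵢ and B′·vᵢ = u′ᵢ·wᵢ, then there exists a unit u ∈ A^× with B′ = u·B. -/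
/-!
Write `v₃ = α₁ v₁ + α₂ v₂`; by Cramer's rule the `αᵢ` are units. Since `B′ vᵢ = λᵢ B vᵢ`,
expanding `B′ v₃` in the basis `B v₁, B v₂` in two ways gives `λᵢ αᵢ = λ₃ αᵢ`, so all `λᵢ`
agree, and then `B′ = λ₃ B` because the two agree on the basis `v₁, v₂`. The same argument
works for `n + 1` vectors in general position in `Aⁿ`.
-/

open Matrix

namespace Matrix

variable {m A : Type*} [Fintype m] [DecidableEq m] [CommRing A]

theorem isUnit_inv_mulVec_apply {P : Matrix m m A} (hP : IsUnit P.det) {z : m → A} {i : m}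
    (hz : IsUnit (P.updateCol i z).det) : IsUnit ((P⁻¹ *ᵥ z) i) := by
  rw [inv_def, smul_mulVec, ← cramer_eq_adjugate_mulVec, Pi.smul_apply, cramer_apply,
    smul_eq_mul]
  exact hP.ringInverse.mul hz

theorem mul_eq_mul_mul_diagonal_of_mulVec_col {B B' P : Matrix m m A} {l : m → A}
    (hcol : ∀ i, B' *ᵥ P.col i = l i • B *ᵥ P.col i) : B' * P = B * P * diagonal l := by
  ext k i
  rw [mul_diagonal, mul_comm]
  exact congrFun (hcol i) k

theorem eq_smul_of_mulVec_col_eq_smul {B B' P : Matrix m m A} (hB : IsUnit B)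
    (hP : IsUnit P.det) {z : m → A} (hz : ∀ i, IsUnit (P.updateCol i z).det) {l : m → A} {c : A}
    (hcol : ∀ i, B' *ᵥ P.col i = l i • B *ᵥ P.col i) (hBz : B' *ᵥ z = c • B *ᵥ z) :
    B' = c • B := by
  have hmul := mul_eq_mul_mul_diagonal_of_mulVec_col hcol
  have hP' : IsUnit P := (isUnit_iff_isUnit_det P).2 hP
  obtain ⟨α, hzα, hα⟩ : ∃ α, z = P *ᵥ α ∧ ∀ i, IsUnit (α i) :=
    ⟨P⁻¹ *ᵥ z, by rw [mulVec_mulVec, mul_nonsing_inv _ hP, one_mulVec],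
      fun i ↦ isUnit_inv_mulVec_apply hP (hz i)⟩
  have hlα : diagonal l *ᵥ α = c • α := by
    apply mulVec_injective_of_isUnit (hB.mul hP')
    rwa [mulVec_mulVec, ← hmul, ← mulVec_mulVec, ← hzα, mulVec_smul, ← mulVec_mulVec, ← hzα]
  have hl : l = fun _ ↦ c := by
    ext i
    have := congrFun hlα i
    rw [mulVec_diagonal] at this
    exact (hα i).mul_right_cancel this
  apply hP'.mul_right_cancel
  rw [hmul, hl, ← smul_one_eq_diagonal, Matrix.mul_smul, mul_one, smul_mul]

end Matrix

theorem stmt1_general {A : Type*} [CommRing A] (v w : Fin 3 → Fin 2 → A)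
    (hv : ∀ i j : Fin 3, i ≠ j → IsUnit (v i 0 * v j 1 - v i 1 * v j 0))
    (B B' : Matrix (Fin 2) (Fin 2) A) (hB : IsUnit B)
    (hBvw : ∀ i : Fin 3, ∃ u : Aˣ, B.mulVec (v i) = (u : A) • w i)
    (hB'vw : ∀ i : Fin 3, ∃ u : Aˣ, B'.mulVec (v i) = (u : A) • w i) :
    ∃ u : Aˣ, B' = (u : A) • B := by
  choose u hu using hBvw
  choose u' hu' using hB'vw
  have hscale (i : Fin 3) : B' *ᵥ v i = ((u' i * (u i)⁻¹ : Aˣ) : A) • B *ᵥ v i := by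
    rw [hu, hu', smul_smul, Units.val_mul, mul_assoc, Units.inv_mul, mul_one]
  let P : Matrix (Fin 2) (Fin 2) A := (of ![v 0, v 1])ᵀ
  have hPcol (i : Fin 2) : P.col i = v i.castSucc := by fin_cases i <;> rfl
  refine ⟨u' 2 * (u 2)⁻¹, eq_smul_of_mulVec_col_eq_smul hB ?_ (z := v 2) ?_
    (fun i ↦ hPcol i ▸ hscale i.castSucc) (hscale 2)⟩
  · simpa [P, det_fin_two] using hv 0 1 (by decide)
  · intro i
    fin_cases i
    · simpa [P, ← updateRow_transpose, det_fin_two, mul_comm] using hv 2 1 (by decide)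
    · simpa [P, ← updateRow_transpose, det_fin_two, mul_comm] using hv 0 2 (by decide)

/-- With `v₁, v₂, v₃, w₁, w₂, w₃ ∈ A²` such that all `det(vᵢ|vⱼ)` and
`det(wᵢ|wⱼ)` (`i ≠ j`) are units: if `B` and `B′` are invertible `2×2` matrices such that
for each `i` there are units `uᵢ, u′ᵢ` with `B·vᵢ = uᵢ·wᵢ` and `B′·vᵢ = u′ᵢ·wᵢ`, then
`B′ = u·B` for some unit `u ∈ Aˣ`. -/
theorem stmt1 {A : Type*} [CommRing A] (v w : Fin 3 → Fin 2 → A)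
    (hv : ∀ i j : Fin 3, i ≠ j → IsUnit (v i 0 * v j 1 - v i 1 * v j 0))
    (hw : ∀ i j : Fin 3, i ≠ j → IsUnit (w i 0 * w j 1 - w i 1 * w j 0))
    (B B' : Matrix (Fin 2) (Fin 2) A) (hB : IsUnit B) (hB' : IsUnit B')
    (hBvw : ∀ i : Fin 3, ∃ u : Aˣ, B.mulVec (v i) = (u : A) • w i)
    (hB'vw : ∀ i : Fin 3, ∃ u : Aˣ, B'.mulVec (v i) = (u : A) • w i) :
    ∃ u : Aˣ, B' = (u : A) • B :=
  stmt1_general v w hv B B' hB hBvw hB'vw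
end

section
/- Let A be an integral domain with fraction field K, and let B and C be integral domains that are A-algebras with injective structure maps, such that B and C are finite (module-finite) and flat as A-modules. Assume that Frac(B) ⊗_K Frac(C) is a field, where Frac(B) and Frac(C) are the fraction fields of B and C, viewed as K-algebras. Then B ⊗_A C is an integral domain, and its fraction field is isomorphic to Frac(B) ⊗_K Frac(C). -/
open scoped TensorProduct nonZeroDivisors

/-!
Since `K` is a localization of `A`, `L ⊗[A] M = L ⊗[K] M`, and the canonical map
`B ⊗[A] C → L ⊗[A] M` is injective because `C` is `A`-flat and so is `L` (a `K`-vector space,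
`K` being `A`-flat). Writing `l = b / s` and `m = c / t` gives `l ⊗ m = (b ⊗ c) / (s ⊗ t)`
with `s ⊗ t` a unit, and such quotients are closed under addition, so every element of
`L ⊗[K] M` is a quotient of elements of `B ⊗[A] C`. When `L ⊗[K] M` is a field, it is therefore
the fraction field of the subring `B ⊗[A] C`.
-/

section

variable (A B C K L M : Type*) [CommRing A] [CommRing B] [CommRing C]
  [Field K] [Field L] [Field M] [Algebra A B] [Algebra A C] [Algebra A K] [IsFractionRing A K]
  [Algebra B L] [Algebra C M] [Algebra A L] [IsScalarTower A B L] [Algebra A M]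
  [IsScalarTower A C M] [Algebra K L] [IsScalarTower A K L] [Algebra K M] [IsScalarTower A K M]

noncomputable def toFractionFieldTensor : B ⊗[A] C →ₐ[A] L ⊗[K] M :=
  ((IsLocalization.algebraTensorEquiv A⁰ K L M).symm.restrictScalars A).toAlgHom.comp
    (Algebra.TensorProduct.map (IsScalarTower.toAlgHom A B L) (IsScalarTower.toAlgHom A C M))

variable {A B C K L M}

@[simp]
theorem toFractionFieldTensor_tmul (b : B) (c : C) :
    toFractionFieldTensor A B C K L M (b ⊗ₜ c) = algebraMap B L b ⊗ₜ algebraMap C M c :=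
  rfl

variable [IsFractionRing B L] [IsFractionRing C M]

theorem toFractionFieldTensor_injective [Module.Flat A C] :
    Function.Injective (toFractionFieldTensor A B C K L M) := by
  have : Module.Flat A K := IsLocalization.flat K A⁰
  have : Module.Flat A L := Module.Flat.trans A K L
  exact (IsLocalization.algebraTensorEquiv A⁰ K L M).symm.injective.comp <|
    TensorProduct.map_injective_of_flat_flat
      (IsScalarTower.toAlgHom A B L).toLinearMap (IsScalarTower.toAlgHom A C M).toLinearMap
      (IsFractionRing.injective B L) (IsFractionRing.injective C M)

variable (A B C) in
theorem toFractionFieldTensor_surj (z : L ⊗[K] M) :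
    ∃ x y, IsUnit (toFractionFieldTensor A B C K L M y) ∧
      z * toFractionFieldTensor A B C K L M y = toFractionFieldTensor A B C K L M x := by
  induction z using TensorProduct.induction_on with
  | zero => exact ⟨0, 1, by simp⟩
  | tmul l m =>
    obtain ⟨⟨b, s⟩, hb⟩ := IsLocalization.surj B⁰ l
    obtain ⟨⟨c, t⟩, hc⟩ := IsLocalization.surj C⁰ m
    refine ⟨b ⊗ₜ c, s ⊗ₜ t, ?_, ?_⟩
    · rw [toFractionFieldTensor_tmul, ← mul_one (algebraMap B L s),
        ← one_mul (algebraMap C M t), ← Algebra.TensorProduct.tmul_mul_tmul]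
      exact ((IsLocalization.map_units L s).map (Algebra.TensorProduct.includeLeft (S := K)
        (B := M))).mul ((IsLocalization.map_units M t).map
          (Algebra.TensorProduct.includeRight (A := L) (R := K)))
    · simp only [toFractionFieldTensor_tmul, Algebra.TensorProduct.tmul_mul_tmul, hb, hc]
  | add z w hz hw =>
    obtain ⟨x, y, hy, hzy⟩ := hz
    obtain ⟨x', y', hy', hwy'⟩ := hw
    refine ⟨x * y' + x' * y, y * y', by simpa using hy.mul hy', ?_⟩
    simp only [map_add, map_mul, ← hzy, ← hwy']
    ring

end

theorem stmt8_general {A B C : Type*} [CommRing A] [CommRing B]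
    [CommRing C] [Algebra A B] [Algebra A C]
    [Module.Flat A C]
    (K L M : Type*) [Field K] [Field L] [Field M]
    [Algebra A K] [IsFractionRing A K]
    [Algebra B L] [IsFractionRing B L] [Algebra C M] [IsFractionRing C M]
    [Algebra A L] [IsScalarTower A B L] [Algebra A M] [IsScalarTower A C M]
    [Algebra K L] [IsScalarTower A K L] [Algebra K M] [IsScalarTower A K M]
    (hfield : IsField (L ⊗[K] M)) :
    IsDomain (B ⊗[A] C) ∧ Nonempty (FractionRing (B ⊗[A] C) ≃+* L ⊗[K] M) := by
  let := hfield.toField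
  let Φ := toFractionFieldTensor A B C K L M
  have hΦ : Function.Injective Φ := toFractionFieldTensor_injective
  let : Algebra (B ⊗[A] C) (L ⊗[K] M) := Φ.toAlgebra
  have : FaithfulSMul (B ⊗[A] C) (L ⊗[K] M) := (faithfulSMul_iff_algebraMap_injective _ _).mpr hΦ
  have : IsFractionRing (B ⊗[A] C) (L ⊗[K] M) := .of_field _ _ fun z ↦ by
    obtain ⟨x, y, hy, h⟩ := toFractionFieldTensor_surj A B C z
    exact ⟨x, y, eq_div_of_mul_eq hy.ne_zero h⟩
  exact ⟨hΦ.isDomain Φ.toRingHom, ⟨(FractionRing.algEquiv _ _).toRingEquiv⟩⟩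

/-- Let `A` be an integral domain with fraction field `K`, and let `B`, `C`
be integral domains that are `A`-algebras with injective structure maps and which are finite
and flat as `A`-modules. Let `L = Frac(B)` and `M = Frac(C)`, viewed as `K`-algebras.
If `L ⊗_K M` is a field, then `B ⊗_A C` is an integral domain whose fraction field is
isomorphic to `L ⊗_K M`. -/
theorem stmt8 {A B C : Type*} [CommRing A] [IsDomain A] [CommRing B] [IsDomain B]
    [CommRing C] [IsDomain C] [Algebra A B] [Algebra A C]
    (hAB : Function.Injective (algebraMap A B)) (hAC : Function.Injective (algebraMap A C))
    [Module.Finite A B] [Module.Flat A B] [Module.Finite A C] [Module.Flat A C]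
    (K L M : Type*) [Field K] [Field L] [Field M]
    [Algebra A K] [IsFractionRing A K]
    [Algebra B L] [IsFractionRing B L] [Algebra C M] [IsFractionRing C M]
    [Algebra A L] [IsScalarTower A B L] [Algebra A M] [IsScalarTower A C M]
    [Algebra K L] [IsScalarTower A K L] [Algebra K M] [IsScalarTower A K M]
    (hfield : IsField (L ⊗[K] M)) :
    IsDomain (B ⊗[A] C) ∧ Nonempty (FractionRing (B ⊗[A] C) ≃+* L ⊗[K] M) :=
  stmt8_general K L M hfield
end
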